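/- arXiv:2309.06426 — 4 statements merged into one kernel-verified Lean document; each statement's English description precedes it below -/
import Mathlib

section
/- For all real numbers k, η, l, t with |k| ≥ 1, one has (1 + t²)·(k² + (η − kt)² + l²) ≥ (1/4)·(1 + k² + η² + l²). -/
/-- The bound `p(t)⁻¹ ≲ ⟨t⟩⁻²·⟨(k,η,l)⟩²` for the moving-frame Fourier symbol
`p(t) = k² + (η − kt)² + l²`, in the form
`(1 + t²)·p(t) ≥ (1/4)·(1 + k² + η² + l²)` whenever `|k| ≥ 1`. -/
theorem symbol_lower_bound
    (k η l t : ℝ) (hk : 1 ≤ |k|) :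
    (1 / 4) * (1 + k ^ 2 + η ^ 2 + l ^ 2) ≤
      (1 + t ^ 2) * (k ^ 2 + (η - k * t) ^ 2 + l ^ 2) := by
  have hk2 : 1 ≤ k ^ 2 := by
    have := sq_abs k
    nlinarith [sq_nonneg (|k| - 1)]
  nlinarith [sq_nonneg (t * (η - k * t) - k), sq_nonneg ((η - k * t) + t * k),
    sq_nonneg t, sq_nonneg l, mul_nonneg (sq_nonneg t) (sq_nonneg l),
    mul_nonneg (sq_nonneg t) (sq_nonneg (η - k * t))]
end

section
/- There is an absolute constant C > 0 with the following property. Let ν, κ, β > 0, let η be real and l a nonzero integer, and set q := η² + l². Suppose v, θ : ℝ → ℂ are differentiable and satisfy for all t ≥ 0: v'(t) = −β·(l²/q)·θ(t) − ν·q·v(t) and θ'(t) = β·v(t) − κ·q·θ(t). Then for every t ≥ 0: |v(t)| ≤ C·exp(−min(ν,κ)·q·t)·(|v(0)| + (|l|/√q)·|θ(0)|) and |θ(t)| ≤ C·exp(−min(ν,κ)·q·t)·((√q/|l|)·|v(0)| + |θ(0)|). -/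
/-!
With `c = l²/q`, the energy `‖v‖² + c‖θ‖²` sees the coupling terms `-β c θ` and `β v` cancel,
so it dissipates at rate at least `2 min(ν,κ) q` and Grönwall gives
`‖v t‖² + c‖θ t‖² ≤ e^{-2 min(ν,κ) q t} (‖v 0‖² + c‖θ 0‖²)`. Both bounds follow with `C = 1`,
since `√c = |l|/√q`.
-/

open Real

theorem le_mul_exp_of_hasDerivAt_le_mul {f f' : ℝ → ℝ} {K : ℝ}
    (hf : ∀ s, 0 ≤ s → HasDerivAt f (f' s) s) (bound : ∀ s, 0 ≤ s → f' s ≤ K * f s)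
    {t : ℝ} (ht : 0 ≤ t) : f t ≤ f 0 * exp (K * t) := by
  have h := le_gronwallBound_of_liminf_deriv_right_le (f' := f') (ε := 0) (b := t)
    (fun s hs => (hf s hs.1).continuousAt.continuousWithinAt)
    (fun s hs _ hr => (hf s hs.1).hasDerivWithinAt.liminf_right_slope_le hr)
    le_rfl (fun s hs => by simpa using bound s hs.1) t ⟨ht, le_rfl⟩
  rwa [sub_zero, gronwallBound_ε0] at h

section Energy

variable {V : Type*} [NormedAddCommGroup V] [InnerProductSpace ℝ V]

def weightedEnergy (c : ℝ) (v θ : ℝ → V) (t : ℝ) : ℝ := ‖v t‖ ^ 2 + c * ‖θ t‖ ^ 2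

theorem hasDerivAt_weightedEnergy {v θ : ℝ → V} {c b α γ t : ℝ}
    (hv : HasDerivAt v (-(b * c) • θ t - α • v t) t)
    (hθ : HasDerivAt θ (b • v t - γ • θ t) t) :
    HasDerivAt (weightedEnergy c v θ)
      (-(2 * α) * ‖v t‖ ^ 2 - 2 * c * γ * ‖θ t‖ ^ 2) t := by
  refine (hv.norm_sq.add (hθ.norm_sq.const_mul c)).congr_deriv ?_
  simp only [inner_sub_right, inner_smul_right, real_inner_self_eq_norm_sq,
    real_inner_comm (θ t) (v t)]
  ring

theorem weightedEnergy_le {v θ : ℝ → V} {c b α γ μ : ℝ} (hc : 0 ≤ c) (hα : μ ≤ α) (hγ : μ ≤ γ)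
    (hv : ∀ t, 0 ≤ t → HasDerivAt v (-(b * c) • θ t - α • v t) t)
    (hθ : ∀ t, 0 ≤ t → HasDerivAt θ (b • v t - γ • θ t) t) {t : ℝ} (ht : 0 ≤ t) :
    weightedEnergy c v θ t ≤ weightedEnergy c v θ 0 * exp (-(2 * μ) * t) := by
  refine le_mul_exp_of_hasDerivAt_le_mul
    (fun s hs => hasDerivAt_weightedEnergy (hv s hs) (hθ s hs)) (fun s _ => ?_) ht
  have hv_excess : 0 ≤ (α - μ) * ‖v s‖ ^ 2 := mul_nonneg (sub_nonneg.2 hα) (sq_nonneg _)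
  have hθ_excess : 0 ≤ c * ((γ - μ) * ‖θ s‖ ^ 2) :=
    mul_nonneg hc (mul_nonneg (sub_nonneg.2 hγ) (sq_nonneg _))
  rw [weightedEnergy]
  nlinarith

end Energy

theorem le_of_sq_add_mul_sq_le {a b a₀ b₀ c r : ℝ} (ha : 0 ≤ a) (hb : 0 ≤ b) (ha₀ : 0 ≤ a₀)
    (hb₀ : 0 ≤ b₀) (hc : 0 < c) (hr : 0 ≤ r)
    (h : a ^ 2 + c * b ^ 2 ≤ (a₀ ^ 2 + c * b₀ ^ 2) * r ^ 2) :
    a ≤ r * (a₀ + √c * b₀) ∧ b ≤ r * ((√c)⁻¹ * a₀ + b₀) := by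
  have hs : 0 < √c := sqrt_pos.2 hc
  have hcs : c = √c ^ 2 := (sq_sqrt hc.le).symm
  have hM : 0 ≤ r * (a₀ + √c * b₀) := by positivity
  have hsum : a ^ 2 + (√c * b) ^ 2 ≤ (r * (a₀ + √c * b₀)) ^ 2 := by
    rw [hcs] at h
    nlinarith [mul_nonneg (mul_nonneg ha₀ hb₀) (mul_nonneg hs.le (sq_nonneg r))]
  constructor
  · exact (pow_le_pow_iff_left₀ ha hM two_ne_zero).1 (by nlinarith [sq_nonneg (√c * b)])
  · have hsb : √c * b ≤ r * (a₀ + √c * b₀) :=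
      (pow_le_pow_iff_left₀ (by positivity) hM two_ne_zero).1 (by nlinarith [sq_nonneg a])
    rw [← mul_le_mul_iff_right₀ hs]
    calc √c * b ≤ r * (a₀ + √c * b₀) := hsb
      _ = √c * (r * ((√c)⁻¹ * a₀ + b₀)) := by field_simp

/-- Decay of the streak components `(u²₀, θ₀)` at a Fourier frequency `(η, l)`,
`l ≠ 0`: both decay like `exp(−min(ν,κ)·q·t)` with a constant independent of
all parameters. -/
theorem streak_v_theta_decay :
    ∃ C : ℝ, 0 < C ∧
      ∀ (ν κ β η : ℝ) (l : ℤ), 0 < ν → 0 < κ → 0 < β → l ≠ 0 →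
        ∀ (q : ℝ), q = η ^ 2 + (l:ℝ) ^ 2 →
          ∀ (v θ : ℝ → ℂ),
            (∀ t, 0 ≤ t → HasDerivAt v
              (-((β * ((l:ℝ) ^ 2 / q) : ℝ) : ℂ) * θ t - ((ν * q : ℝ) : ℂ) * v t) t) →
            (∀ t, 0 ≤ t → HasDerivAt θ
              (((β : ℝ) : ℂ) * v t - ((κ * q : ℝ) : ℂ) * θ t) t) →
            ∀ t, 0 ≤ t →
              ‖v t‖ ≤
                  C * Real.exp (-(min ν κ) * q * t) *
                    (‖v 0‖ + (|(l:ℝ)| / Real.sqrt q) * ‖θ 0‖) ∧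
                ‖θ t‖ ≤
                  C * Real.exp (-(min ν κ) * q * t) *
                    ((Real.sqrt q / |(l:ℝ)|) * ‖v 0‖ + ‖θ 0‖) := by
  refine ⟨1, one_pos, fun ν κ β η l hν hκ hβ hl q hq v θ hv hθ t ht => ?_⟩
  have hq₀ : 0 < q := by rw [hq]; positivity
  have hc : 0 < (l:ℝ) ^ 2 / q := by positivity
  have hsqrt : √((l:ℝ) ^ 2 / q) = |(l:ℝ)| / √q := by rw [sqrt_div (sq_nonneg _), sqrt_sq_eq_abs]
  have hE := weightedEnergy_le (v := v) (θ := θ) (b := β) (μ := min ν κ * q) hc.le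
    (mul_le_mul_of_nonneg_right (min_le_left ν κ) hq₀.le)
    (mul_le_mul_of_nonneg_right (min_le_right ν κ) hq₀.le)
    (fun s hs => by simpa only [neg_smul, Complex.real_smul, neg_mul] using hv s hs)
    (fun s hs => by simpa only [Complex.real_smul] using hθ s hs) ht
  have hexp : exp (-(2 * (min ν κ * q)) * t) = exp (-(min ν κ) * q * t) ^ 2 := by
    rw [sq, ← exp_add]; ring_nf
  rw [hexp] at hE
  obtain ⟨hvt, hθt⟩ := le_of_sq_add_mul_sq_le (norm_nonneg _) (norm_nonneg _) (norm_nonneg _)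
    (norm_nonneg _) hc (exp_pos _).le hE
  rw [hsqrt] at hvt hθt
  rw [inv_div] at hθt
  rw [one_mul]
  exact ⟨hvt, hθt⟩
end

section
/- There is an absolute constant C > 0 with the following property. Let ν, κ, β > 0, let η be real and l a nonzero integer, and set q := η² + l². Suppose w, v, θ : ℝ → ℂ are differentiable and satisfy for all t ≥ 0: w'(t) = β·(η·l/q)·θ(t) − ν·q·w(t), v'(t) = −β·(l²/q)·θ(t) − ν·q·v(t), and θ'(t) = β·v(t) − κ·q·θ(t). Then for every t ≥ 0: |w(t)| ≤ C·exp(−min(ν,κ)·q·t)·( |w(0)| + (|η|/|l|)·|v(0)| + (|η|/√q)·|θ(0)| ). -/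
/-! The combination `W = w + (η / l) v` eliminates `θ` and solves `W' = -ν q W`, so it decays like
`exp (-ν q t)`. The pair `(v, θ)` is a damped system whose coupling is skew-adjoint for the energy
`‖v‖² + (l² / q) ‖θ‖²`, so the cross terms cancel and this energy decays like
`exp (-2 min(ν, κ) q t)`; hence `‖v‖` decays like `exp (-min(ν, κ) q t)`. Writing
`w = W - (η / l) v` gives the bound with `C = 2`. -/

open Real

theorem le_mul_exp_of_hasDerivAt_le_neg_mul {f f' : ℝ → ℝ} {c t : ℝ}
    (hf : ∀ s, 0 ≤ s → HasDerivAt f (f' s) s) (hbound : ∀ s, 0 ≤ s → f' s ≤ -c * f s)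
    (ht : 0 ≤ t) : f t ≤ f 0 * exp (-c * t) := by
  have := le_gronwallBound_of_liminf_deriv_right_le (f' := f') (K := -c) (ε := 0) (b := t)
    (fun s hs => (hf s hs.1).continuousAt.continuousWithinAt)
    (fun s hs r hr => (hf s hs.1).hasDerivWithinAt.liminf_right_slope_le hr)
    le_rfl (fun s hs => (hbound s hs.1).trans_eq (add_zero _).symm) t ⟨ht, le_rfl⟩
  simpa [gronwallBound_ε0] using this

theorem le_exp_neg_mul_of_sq_le {x y c t : ℝ} (hy : 0 ≤ y)
    (h : x ^ 2 ≤ y ^ 2 * exp (-(2 * c) * t)) : x ≤ exp (-c * t) * y := by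
  refine le_of_sq_le_sq (h.trans_eq ?_) (by positivity)
  rw [mul_pow, ← exp_nat_mul]
  ring_nf

variable {F : Type*} [NormedAddCommGroup F] [InnerProductSpace ℝ F]

theorem norm_le_exp_mul_norm_of_hasDerivAt_neg_smul {u : ℝ → F} {a m t : ℝ}
    (hu : ∀ s, 0 ≤ s → HasDerivAt u (-a • u s) s) (hm : m ≤ a) (ht : 0 ≤ t) :
    ‖u t‖ ≤ exp (-m * t) * ‖u 0‖ := by
  refine le_exp_neg_mul_of_sq_le (norm_nonneg _) <|
    le_mul_exp_of_hasDerivAt_le_neg_mul (fun s hs => (hu s hs).norm_sq) (fun s _ => ?_) ht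
  rw [inner_smul_right, real_inner_self_eq_norm_sq]
  nlinarith [sq_nonneg ‖u s‖]

theorem hasDerivAt_add_smul_of_mul_eq {w v θ : ℝ → F} {p σ a c x : ℝ}
    (hw : HasDerivAt w (p • θ x - a • w x) x) (hv : HasDerivAt v (-σ • θ x - a • v x) x)
    (hcσ : c * σ = p) : HasDerivAt (fun y => w y + c • v y) (-a • (w x + c • v x)) x := by
  refine (hw.add (hv.const_smul c)).congr_deriv ?_
  rw [← hcσ]
  module

section SkewCoupling

variable {v θ : ℝ → F} {β r a b m : ℝ}

theorem weighted_energy_le_of_skew_coupling (hv : ∀ s, 0 ≤ s → HasDerivAt v (-(β * r) • θ s - a • v s) s)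
    (hθ : ∀ s, 0 ≤ s → HasDerivAt θ (β • v s - b • θ s) s) (hr : 0 ≤ r) (ha : m ≤ a)
    (hb : m ≤ b) {t : ℝ} (ht : 0 ≤ t) :
    ‖v t‖ ^ 2 + r * ‖θ t‖ ^ 2 ≤ (‖v 0‖ ^ 2 + r * ‖θ 0‖ ^ 2) * exp (-(2 * m) * t) := by
  refine le_mul_exp_of_hasDerivAt_le_neg_mul
    (fun s hs => (hv s hs).norm_sq.add ((hθ s hs).norm_sq.const_mul r)) (fun s _ => ?_) ht
  simp only [Pi.add_apply, inner_sub_right, inner_smul_right, real_inner_self_eq_norm_sq,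
    real_inner_comm (v s) (θ s)]
  nlinarith [mul_le_mul_of_nonneg_right ha (sq_nonneg ‖v s‖),
    mul_le_mul_of_nonneg_right hb (mul_nonneg hr (sq_nonneg ‖θ s‖))]

theorem norm_le_of_skew_coupling (hv : ∀ s, 0 ≤ s → HasDerivAt v (-(β * r) • θ s - a • v s) s)
    (hθ : ∀ s, 0 ≤ s → HasDerivAt θ (β • v s - b • θ s) s) (hr : 0 ≤ r) (ha : m ≤ a)
    (hb : m ≤ b) {t : ℝ} (ht : 0 ≤ t) :
    ‖v t‖ ≤ exp (-m * t) * (‖v 0‖ + √r * ‖θ 0‖) := by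
  refine le_exp_neg_mul_of_sq_le (by positivity) ?_
  have hE := weighted_energy_le_of_skew_coupling hv hθ hr ha hb ht
  have hexp := exp_pos (-(2 * m) * t)
  have hsq : ‖v 0‖ ^ 2 + r * ‖θ 0‖ ^ 2 ≤ (‖v 0‖ + √r * ‖θ 0‖) ^ 2 := by
    nlinarith [sq_sqrt hr, mul_nonneg (mul_nonneg (norm_nonneg (v 0)) (sqrt_nonneg r))
      (norm_nonneg (θ 0))]
  nlinarith [mul_le_mul_of_nonneg_right hsq hexp.le, mul_nonneg hr (sq_nonneg ‖θ t‖)]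

end SkewCoupling

theorem norm_le_of_norm_add_smul_le {x y x₀ y₀ : F} {c P D : ℝ} (hP : 0 ≤ P) (hD : 0 ≤ D)
    (hxy : ‖x + c • y‖ ≤ P * ‖x₀ + c • y₀‖) (hy : ‖y‖ ≤ P * (‖y₀‖ + D)) :
    ‖x‖ ≤ 2 * P * (‖x₀‖ + |c| * ‖y₀‖ + |c| * D) := by
  have hx₀ := norm_add_le x₀ (c • y₀)
  calc ‖x‖ = ‖(x + c • y) - c • y‖ := by rw [add_sub_cancel_right]
    _ ≤ ‖x + c • y‖ + |c| * ‖y‖ := by rw [← Real.norm_eq_abs, ← norm_smul]; exact norm_sub_le _ _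
    _ ≤ P * (‖x₀‖ + |c| * ‖y₀‖) + |c| * (P * (‖y₀‖ + D)) := by
        rw [norm_smul, Real.norm_eq_abs] at hx₀
        gcongr
        exact hxy.trans (by gcongr)
    _ ≤ 2 * P * (‖x₀‖ + |c| * ‖y₀‖ + |c| * D) := by
        nlinarith [mul_nonneg hP (norm_nonneg x₀), mul_nonneg (mul_nonneg hP (abs_nonneg c)) hD]

/-- Decay of the spanwise streak mode `w = u³₀` of the linearized Boussinesq
system around stratified Couette flow, with a constant independent of all
parameters. -/
theorem spanwise_streak_decay :
    ∃ C : ℝ, 0 < C ∧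
      ∀ (ν κ β η : ℝ) (l : ℤ), 0 < ν → 0 < κ → 0 < β → l ≠ 0 →
        ∀ (q : ℝ), q = η ^ 2 + (l:ℝ) ^ 2 →
          ∀ (w v θ : ℝ → ℂ),
            (∀ t, 0 ≤ t → HasDerivAt w
              (((β * (η * (l:ℝ) / q) : ℝ) : ℂ) * θ t - ((ν * q : ℝ) : ℂ) * w t) t) →
            (∀ t, 0 ≤ t → HasDerivAt v
              (-((β * ((l:ℝ) ^ 2 / q) : ℝ) : ℂ) * θ t - ((ν * q : ℝ) : ℂ) * v t) t) →
            (∀ t, 0 ≤ t → HasDerivAt θ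
              (((β : ℝ) : ℂ) * v t - ((κ * q : ℝ) : ℂ) * θ t) t) →
            ∀ t, 0 ≤ t →
              ‖w t‖ ≤
                C * Real.exp (-(min ν κ) * q * t) *
                  (‖w 0‖ + (|η| / |(l:ℝ)|) * ‖v 0‖
                    + (|η| / Real.sqrt q) * ‖θ 0‖) := by
  refine ⟨2, two_pos, fun ν κ β η l _ _ _ hl q hq w v θ hw hv hθ t ht => ?_⟩
  have hl' : (l : ℝ) ≠ 0 := Int.cast_ne_zero.mpr hl
  have hq0 : 0 ≤ q := hq ▸ by positivity
  have hνq : min ν κ * q ≤ ν * q := mul_le_mul_of_nonneg_right (min_le_left ν κ) hq0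
  have hκq : min ν κ * q ≤ κ * q := mul_le_mul_of_nonneg_right (min_le_right ν κ) hq0
  simp only [← Complex.ofReal_neg, ← Complex.real_smul] at hw hv hθ
  have hW : ‖w t + (η / l) • v t‖ ≤ exp (-(min ν κ * q) * t) * ‖w 0 + (η / l) • v 0‖ :=
    norm_le_exp_mul_norm_of_hasDerivAt_neg_smul
      (fun s hs => hasDerivAt_add_smul_of_mul_eq (hw s hs) (hv s hs) (by field_simp)) hνq ht
  have hv' := norm_le_of_skew_coupling hv hθ (by positivity) hνq hκq ht
  have hcoef : |η / l| * √((l : ℝ) ^ 2 / q) = |η| / √q := by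
    rw [sqrt_div' _ hq0, sqrt_sq_eq_abs, abs_div]
    field_simp [abs_ne_zero.mpr hl']
  have := norm_le_of_norm_add_smul_le (exp_pos _).le (by positivity) hW hv'
  rw [← mul_assoc |η / l|, hcoef, abs_div] at this
  rwa [neg_mul (min ν κ)]
end

section
/- Let a ≥ 0 and b > 0 be real numbers with a ≠ b, and let c be a complex number with c² = a² − b² (so c ≠ 0). Then for every t ≥ 0: |exp(−a·t)·cosh(c·t)| ≤ 2 and |exp(−a·t)·sinh(c·t)/c| ≤ 2/max(a, b), where cosh and sinh are the complex hyperbolic functions. -/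
/-!
Since `c²` is real, `c` is real or purely imaginary; with `u = |Re c|` this gives `u ≤ a` and
`max a b ≤ (a - u) + ‖c‖`. Both `‖cosh (c t)‖` and `‖sinh (c t)‖` are at most `cosh (u t)`, and
`‖sinh (c t)‖ ≤ ‖c‖ t cosh (u t)` by the mean value inequality, so the two kernels are bounded by
`e^{-(a-u) t}` and `e^{-(a-u) t} min (1/‖c‖, t)`. In the second, either `‖c‖ ≥ max a b / 2`, or the
decay rate `a - u` is at least `max a b / 2` and `t e^{-(a-u) t} ≤ 1/(a - u)`.
-/

open Set

namespace Complex

theorem norm_cosh_le_cosh_re (z : ℂ) : ‖cosh z‖ ≤ Real.cosh z.re := by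
  have h := norm_add_le (exp z) (exp (-z))
  rw [norm_exp, norm_exp, neg_re] at h
  rw [cosh, norm_div, Complex.norm_two, Real.cosh_eq]
  gcongr

theorem norm_sinh_le_cosh_re (z : ℂ) : ‖sinh z‖ ≤ Real.cosh z.re := by
  have h := norm_sub_le (exp z) (exp (-z))
  rw [norm_exp, norm_exp, neg_re] at h
  rw [sinh, norm_div, Complex.norm_two, Real.cosh_eq]
  gcongr

theorem norm_sinh_le_norm_mul_cosh_re (z : ℂ) : ‖sinh z‖ ≤ ‖z‖ * Real.cosh z.re := by
  have hderiv : ∀ s ∈ Icc (0 : ℝ) 1, HasDerivWithinAt (fun s : ℝ => sinh (s * z))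
      (cosh (s * z) * z) (Icc 0 1) s := fun s _ =>
    (((hasDerivAt_id (s : ℂ)).mul_const z).csinh.comp_ofReal.congr_deriv
      (by simp)).hasDerivWithinAt
  have hbound : ∀ s ∈ Ico (0 : ℝ) 1, ‖cosh (s * z) * z‖ ≤ ‖z‖ * Real.cosh z.re := by
    rintro s ⟨hs0, hs1⟩
    rw [norm_mul, mul_comm]
    gcongr
    refine (norm_cosh_le_cosh_re _).trans (Real.cosh_le_cosh.2 ?_)
    rw [re_ofReal_mul, abs_mul, abs_of_nonneg hs0]
    exact mul_le_of_le_one_left (abs_nonneg _) hs1.le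
  simpa using norm_image_sub_le_of_norm_deriv_le_segment_01' hderiv hbound

theorem norm_sinh_mul_div_le (c : ℂ) {t : ℝ} (ht : 0 ≤ t) :
    ‖sinh (c * t) / c‖ ≤ min (1 / ‖c‖) t * Real.cosh (c.re * t) := by
  have hre : (c * t).re = c.re * t := by simp
  rw [min_mul_of_nonneg _ _ (Real.cosh_pos _).le, norm_div, ← hre]
  refine le_min ?_ ?_
  · rw [one_div_mul_eq_div]
    gcongr
    exact norm_sinh_le_cosh_re _
  · refine div_le_of_le_mul₀ (norm_nonneg _) (by positivity) ?_
    calc ‖sinh (c * t)‖ ≤ ‖c * t‖ * Real.cosh (c * t).re := norm_sinh_le_norm_mul_cosh_re _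
      _ = t * Real.cosh (c * t).re * ‖c‖ := by
        rw [norm_mul, norm_real, Real.norm_of_nonneg ht]; ring

theorem sq_eq_ofReal_iff {c : ℂ} {r : ℝ} :
    c ^ 2 = r ↔ c.re * c.im = 0 ∧ c.re ^ 2 - c.im ^ 2 = r := by
  simp only [Complex.ext_iff, sq, mul_re, mul_im, ofReal_re, ofReal_im]
  constructor <;> rintro ⟨hre, him⟩ <;> constructor <;> linarith

variable {a b : ℝ} {c : ℂ}

theorem abs_re_le_of_sq_eq_sq_sub_sq (ha : 0 ≤ a) (h : c ^ 2 = (a : ℂ) ^ 2 - (b : ℂ) ^ 2) :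
    |c.re| ≤ a := by
  obtain ⟨hprod, hdiff⟩ := (sq_eq_ofReal_iff (r := a ^ 2 - b ^ 2)).1 (by push_cast; exact h)
  refine abs_le_of_sq_le_sq ?_ ha
  rcases mul_eq_zero.1 hprod with hre | him
  · rw [hre, sq, zero_mul]; positivity
  · rw [him] at hdiff; nlinarith

theorem max_le_sub_abs_re_add_norm (ha : 0 ≤ a) (h : c ^ 2 = (a : ℂ) ^ 2 - (b : ℂ) ^ 2) :
    max a b ≤ a - |c.re| + ‖c‖ := by
  obtain ⟨hprod, hdiff⟩ := (sq_eq_ofReal_iff (r := a ^ 2 - b ^ 2)).1 (by push_cast; exact h)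
  rcases mul_eq_zero.1 hprod with hre | him
  · have hnorm : ‖c‖ = |c.im| := by rw [norm_eq_sqrt_sq_add_sq, hre]; simp [Real.sqrt_sq_eq_abs]
    rw [hre, abs_zero, sub_zero, hnorm]
    refine max_le (le_add_of_nonneg_right (abs_nonneg _)) ?_
    nlinarith [sq_abs c.im, abs_nonneg c.im]
  · have hnorm : ‖c‖ = |c.re| := by rw [norm_eq_sqrt_sq_add_sq, him]; simp [Real.sqrt_sq_eq_abs]
    rw [hnorm, sub_add_cancel]
    refine max_le le_rfl ?_
    rw [him] at hdiff
    nlinarith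

end Complex

namespace Real

theorem mul_exp_neg_mul_le_one_div {d : ℝ} (hd : 0 < d) (t : ℝ) : t * exp (-(d * t)) ≤ 1 / d := by
  rw [le_div_iff₀ hd]
  calc t * exp (-(d * t)) * d = d * t * exp (-(d * t)) := by ring
    _ ≤ exp (-1) := mul_exp_neg_le_exp_neg_one _
    _ ≤ 1 := exp_le_one_iff.2 (by norm_num)

theorem exp_neg_mul_mul_cosh_le (a u : ℝ) {t : ℝ} (ht : 0 ≤ t) :
    exp (-(a * t)) * cosh (u * t) ≤ exp (-((a - |u|) * t)) := by
  have hpos : exp (u * t) ≤ exp (|u| * t) := exp_le_exp.2 (by gcongr; exact le_abs_self u)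
  have hneg : exp (-(u * t)) ≤ exp (|u| * t) :=
    exp_le_exp.2 (by rw [← neg_mul]; gcongr; exact neg_le_abs u)
  calc exp (-(a * t)) * cosh (u * t) ≤ exp (-(a * t)) * exp (|u| * t) := by
        rw [cosh_eq]; gcongr; linarith
    _ = exp (-((a - |u|) * t)) := by rw [← exp_add]; ring_nf

theorem exp_neg_mul_mul_min_le_two_div {d ω M t : ℝ} (hd : 0 ≤ d) (hM : 0 < M) (h : M ≤ d + ω)
    (ht : 0 ≤ t) : exp (-(d * t)) * min (1 / ω) t ≤ 2 / M := by
  rcases le_or_gt (M / 2) ω with hω | hω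
  · have hω0 : 0 < ω := by linarith
    calc exp (-(d * t)) * min (1 / ω) t ≤ 1 * (1 / ω) :=
          mul_le_mul (exp_le_one_iff.2 (by nlinarith)) (min_le_left _ _) (by positivity) zero_le_one
      _ ≤ 2 / M := by rw [one_mul, div_le_div_iff₀ hω0 hM]; linarith
  · have hd0 : 0 < d := by linarith
    calc exp (-(d * t)) * min (1 / ω) t ≤ t * exp (-(d * t)) := by
          rw [mul_comm]; gcongr; exact min_le_right _ _
      _ ≤ 1 / d := mul_exp_neg_mul_le_one_div hd0 t
      _ ≤ 2 / M := by rw [div_le_div_iff₀ hd0 hM]; linarith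

end Real

theorem oscillatory_kernel_bounds_general
    (a b : ℝ) (ha : 0 ≤ a) (hb : 0 < b)
    (c : ℂ) (hc2 : c ^ 2 = (a:ℂ) ^ 2 - (b:ℂ) ^ 2) :
    ∀ t : ℝ, 0 ≤ t →
      ‖Complex.exp (-(a:ℂ) * t) * Complex.cosh (c * t)‖ ≤ 2 ∧
        ‖Complex.exp (-(a:ℂ) * t) * Complex.sinh (c * t) / c‖ ≤
          2 / max a b := by
  intro t ht
  have hexp : ‖Complex.exp (-(a:ℂ) * t)‖ = Real.exp (-(a * t)) := by
    rw [Complex.norm_exp]; simp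
  have hre : (c * t).re = c.re * t := by simp
  have hdecay := Real.exp_neg_mul_mul_cosh_le a c.re ht
  have hrate : 0 ≤ a - |c.re| := sub_nonneg.2 (Complex.abs_re_le_of_sq_eq_sq_sub_sq ha hc2)
  constructor
  · calc _ = Real.exp (-(a * t)) * ‖Complex.cosh (c * t)‖ := by rw [norm_mul, hexp]
      _ ≤ Real.exp (-(a * t)) * Real.cosh (c.re * t) := by
          gcongr; rw [← hre]; exact Complex.norm_cosh_le_cosh_re _
      _ ≤ Real.exp (-((a - |c.re|) * t)) := hdecay
      _ ≤ 2 := (Real.exp_le_one_iff.2 (by nlinarith)).trans one_le_two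
  · calc _ = Real.exp (-(a * t)) * ‖Complex.sinh (c * t) / c‖ := by
          rw [mul_div_assoc, norm_mul, hexp]
      _ ≤ Real.exp (-(a * t)) * (min (1 / ‖c‖) t * Real.cosh (c.re * t)) := by
          gcongr; exact Complex.norm_sinh_mul_div_le c ht
      _ = Real.exp (-(a * t)) * Real.cosh (c.re * t) * min (1 / ‖c‖) t := by ring
      _ ≤ Real.exp (-((a - |c.re|) * t)) * min (1 / ‖c‖) t := by gcongr
      _ ≤ 2 / max a b := Real.exp_neg_mul_mul_min_le_two_div hrate (lt_max_of_lt_right hb)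
          (by linarith [Complex.max_le_sub_abs_re_add_norm ha hc2]) ht

/-- Uniform-in-time bounds on the oscillatory kernels in the zero-mode
analysis: for `a ≥ 0`, `b > 0`, `a ≠ b` and `c² = a² − b²` (`c ≠ 0`),
`|e^{−at}·cosh(ct)| ≤ 2` and `|e^{−at}·sinh(ct)/c| ≤ 2/max(a,b)`. -/
theorem oscillatory_kernel_bounds
    (a b : ℝ) (ha : 0 ≤ a) (hb : 0 < b) (hab : a ≠ b)
    (c : ℂ) (hc2 : c ^ 2 = (a:ℂ) ^ 2 - (b:ℂ) ^ 2) (hc : c ≠ 0) :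
    ∀ t : ℝ, 0 ≤ t →
      ‖Complex.exp (-(a:ℂ) * t) * Complex.cosh (c * t)‖ ≤ 2 ∧
        ‖Complex.exp (-(a:ℂ) * t) * Complex.sinh (c * t) / c‖ ≤
          2 / max a b :=
  oscillatory_kernel_bounds_general a b ha hb c hc2
end
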